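/- arXiv:math/0211237 — 3 statements merged into one kernel-verified Lean document; each statement's English description precedes it below -/
import Mathlib

section
/- In any orthomodular lattice, x +_l y := (x ∨ (x' ∧ y)) ∧ (x' ∨ y') commutes with x, i.e., (x +_l y) = ((x +_l y) ∧ x) ∨ ((x +_l y) ∧ x'). -/
/-- An orthomodular lattice: a bounded lattice with an orthocomplementation
satisfying the orthomodular law. -/
class OML (α : Type*) extends Lattice α, BoundedOrder α, Compl α where
  inf_compl : ∀ x : α, x ⊓ xᶜ = ⊥
  sup_compl : ∀ x : α, x ⊔ xᶜ = ⊤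
  compl_compl : ∀ x : α, xᶜᶜ = x
  compl_antitone : ∀ x y : α, x ≤ y → yᶜ ≤ xᶜ
  orthomodular : ∀ x y : α, x ≤ y → y = x ⊔ (y ⊓ xᶜ)

def pl {α : Type*} [OML α] (x y : α) : α := (x ⊔ (xᶜ ⊓ y)) ⊓ (xᶜ ⊔ yᶜ)

section aux
variable {α : Type*} [OML α]

lemma oml_dm_sup (a b : α) : (a ⊔ b)ᶜ = aᶜ ⊓ bᶜ := by
  apply le_antisymm
  · exact le_inf (OML.compl_antitone _ _ le_sup_left) (OML.compl_antitone _ _ le_sup_right)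
  · have h1 : aᶜᶜ ≤ (aᶜ ⊓ bᶜ)ᶜ := OML.compl_antitone _ _ inf_le_left
    have h2 : bᶜᶜ ≤ (aᶜ ⊓ bᶜ)ᶜ := OML.compl_antitone _ _ inf_le_right
    rw [OML.compl_compl] at h1 h2
    have h3 : a ⊔ b ≤ (aᶜ ⊓ bᶜ)ᶜ := sup_le h1 h2
    have h4 := OML.compl_antitone _ _ h3
    rwa [OML.compl_compl] at h4

lemma oml_dm_inf (a b : α) : (a ⊓ b)ᶜ = aᶜ ⊔ bᶜ := by
  have h := oml_dm_sup aᶜ bᶜ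
  rw [OML.compl_compl, OML.compl_compl] at h
  rw [← h, OML.compl_compl]

lemma oml_dual (b c : α) (h : c ≤ b) : b ⊓ (c ⊔ bᶜ) = c := by
  have h1 := OML.orthomodular bᶜ cᶜ (OML.compl_antitone _ _ h)
  have h2 : cᶜᶜ = (bᶜ ⊔ (cᶜ ⊓ bᶜᶜ))ᶜ := by rw [← h1]
  rw [OML.compl_compl, oml_dm_sup, oml_dm_inf, OML.compl_compl, OML.compl_compl] at h2
  exact h2.symm

end aux

theorem stmt_6 {α : Type*} [OML α] (x y : α) :
    pl x y = ((pl x y) ⊓ x) ⊔ ((pl x y) ⊓ xᶜ) := by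
  set c := xᶜ ⊓ y with hc
  set m := xᶜ ⊔ yᶜ with hm
  set d := x ⊓ m with hd
  have hcx : c ≤ xᶜ := inf_le_left
  have hcm : c ≤ m := le_trans hcx le_sup_left
  have ha : pl x y = (x ⊔ c) ⊓ m := rfl
  -- Step 1 : pl x y ⊓ x = d
  have h1 : pl x y ⊓ x = d := by
    apply le_antisymm
    · exact le_inf (le_trans inf_le_right le_rfl |>.trans le_rfl |>.trans le_rfl |>.trans le_rfl)
        (le_trans inf_le_left inf_le_right) |>.trans le_rfl
    · exact le_inf (le_inf (le_trans inf_le_left le_sup_left) inf_le_right) inf_le_left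
  -- Step 2 : pl x y ⊓ xᶜ = c
  have hxc : (x ⊔ c) ⊓ xᶜ = c := by
    have := oml_dual xᶜ c hcx
    rw [OML.compl_compl, sup_comm] at this
    rw [inf_comm, this]
  have h2 : pl x y ⊓ xᶜ = c := by
    apply le_antisymm
    · calc pl x y ⊓ xᶜ ≤ (x ⊔ c) ⊓ xᶜ :=
            inf_le_inf_right _ inf_le_left
        _ = c := hxc
    · exact le_inf (le_inf (le_sup_right) hcm) hcx
  -- Step 3 : d ⊔ c ≤ pl x y
  have hb : d ⊔ c ≤ pl x y := by
    rw [ha]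
    exact sup_le (le_inf (le_trans inf_le_left le_sup_left) inf_le_right)
      (le_inf le_sup_right hcm)
  -- Step 4 : pl x y ⊓ (d ⊔ c)ᶜ = ⊥
  have hcc : cᶜ = x ⊔ yᶜ := by rw [hc, oml_dm_inf, OML.compl_compl]
  have hxcc : x ≤ cᶜ := by rw [hcc]; exact le_sup_left
  have hpc : (x ⊔ c) ⊓ cᶜ = x := by
    have := oml_dual cᶜ x hxcc
    rw [OML.compl_compl] at this
    rw [inf_comm, this]
  have h4 : pl x y ⊓ (d ⊔ c)ᶜ = ⊥ := by
    rw [oml_dm_sup]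
    apply le_antisymm _ bot_le
    have hx : pl x y ⊓ (dᶜ ⊓ cᶜ) ≤ x := by
      calc pl x y ⊓ (dᶜ ⊓ cᶜ) ≤ (x ⊔ c) ⊓ cᶜ :=
            le_inf (le_trans inf_le_left inf_le_left) (le_trans inf_le_right inf_le_right)
        _ = x := hpc
    have hmle : pl x y ⊓ (dᶜ ⊓ cᶜ) ≤ m := le_trans inf_le_left inf_le_right
    have hdc : pl x y ⊓ (dᶜ ⊓ cᶜ) ≤ dᶜ := le_trans inf_le_right inf_le_left
    have : pl x y ⊓ (dᶜ ⊓ cᶜ) ≤ d ⊓ dᶜ := le_inf (le_inf hx hmle) hdc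
    rw [OML.inf_compl] at this
    exact this
  -- conclude by orthomodularity
  have h5 := OML.orthomodular (d ⊔ c) (pl x y) hb
  rw [h4, sup_bot_eq] at h5
  rw [h1, h2, ← h5]
end

section
/- In any orthomodular lattice, the operation x +_l y := (x ∨ (x' ∧ y)) ∧ (x' ∨ y') is right cancellative (a +_l b = c +_l b implies a = c) and left invertible (for all a, b there exists c with c +_l a = b, namely c = b +_l a). -/
section OMLFacts

variable {α : Type*} [OML α]

private lemma occ (x : α) : xᶜᶜ = x := OML.compl_compl x

private lemma oanti {x y : α} (h : x ≤ y) : yᶜ ≤ xᶜ := OML.compl_antitone x y h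

/-- from a ≤ bᶜ conclude b ≤ aᶜ -/
private lemma ole1 {a b : α} (h : a ≤ bᶜ) : b ≤ aᶜ := by
  have := oanti h; rwa [occ] at this

private lemma oinf (x : α) : x ⊓ xᶜ = ⊥ := OML.inf_compl x

private lemma oinf' (x : α) : xᶜ ⊓ x = ⊥ := by rw [inf_comm]; exact oinf x

private lemma odm_sup (x y : α) : (x ⊔ y)ᶜ = xᶜ ⊓ yᶜ := by
  apply le_antisymm
  · exact le_inf (oanti le_sup_left) (oanti le_sup_right)
  · have h : x ⊔ y ≤ (xᶜ ⊓ yᶜ)ᶜ :=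
      sup_le (ole1 inf_le_left) (ole1 inf_le_right)
    have := oanti h
    rwa [occ] at this

private lemma odm_inf (x y : α) : (x ⊓ y)ᶜ = xᶜ ⊔ yᶜ := by
  have h := odm_sup xᶜ yᶜ
  rw [occ, occ] at h
  rw [← h, occ]

private lemma oml {x y : α} (h : x ≤ y) : y = x ⊔ (y ⊓ xᶜ) := OML.orthomodular x y h

/-- dual orthomodular law -/
private lemma oml' {u b : α} (h : u ≤ b) : b ⊓ (bᶜ ⊔ u) = u := by
  have h2 : uᶜ = bᶜ ⊔ (uᶜ ⊓ b) := by
    have := oml (oanti h); rwa [occ] at this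
  calc b ⊓ (bᶜ ⊔ u) = (bᶜ ⊔ (uᶜ ⊓ b))ᶜ := by
        rw [odm_sup, occ, odm_inf, occ, sup_comm]
    _ = uᶜᶜ := by rw [← h2]
    _ = u := occ u

/-- commutation relation -/
private def Cm (a b : α) : Prop := a = (a ⊓ b) ⊔ (a ⊓ bᶜ)

private lemma cm_of_le {a b : α} (h : a ≤ b) : Cm a b := by
  unfold Cm
  rw [inf_eq_left.mpr h]
  exact (sup_eq_left.mpr inf_le_left).symm

private lemma cm_of_le_compl {a b : α} (h : a ≤ bᶜ) : Cm a b := by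
  unfold Cm
  rw [inf_eq_left.mpr h, sup_comm]
  exact (sup_eq_left.mpr inf_le_left).symm

private lemma cm_compl {a b : α} (h : Cm a b) : Cm a bᶜ := by
  unfold Cm at *
  rw [occ, sup_comm]
  exact h

private lemma cm_symm {a b : α} (h : Cm a b) : Cm b a := by
  unfold Cm at *
  have hsup : bᶜ ⊔ (a ⊓ b) = bᶜ ⊔ a := by
    conv_rhs => rw [h]
    rw [← sup_assoc]
    exact (sup_eq_left.mpr (inf_le_right.trans le_sup_left)).symm
  have h1 : b ⊓ (bᶜ ⊔ a) = a ⊓ b := by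
    rw [← hsup]
    exact oml' inf_le_right
  have hm : (b ⊓ a) ⊔ (b ⊓ aᶜ) ≤ b := sup_le inf_le_left inf_le_left
  have hb := oml hm
  have hmc : b ⊓ ((b ⊓ a) ⊔ (b ⊓ aᶜ))ᶜ = ⊥ := by
    rw [odm_sup, odm_inf, odm_inf, occ, inf_comm (bᶜ ⊔ aᶜ) (bᶜ ⊔ a), ← inf_assoc, h1]
    rw [show bᶜ ⊔ aᶜ = aᶜ ⊔ bᶜ from sup_comm _ _, ← odm_inf, inf_comm a b]
    exact oinf _
  rw [hmc, sup_bot_eq] at hb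
  exact hb

/-- Foulis–Holland distributivity -/
private lemma fh1 {a b c : α} (hab : Cm a b) (hac : Cm a c) :
    a ⊓ (b ⊔ c) = (a ⊓ b) ⊔ (a ⊓ c) := by
  have hb := cm_symm hab
  have hc := cm_symm hac
  set w : α := (a ⊓ b) ⊔ (a ⊓ c) with hw
  set k : α := (aᶜ ⊓ b) ⊔ (aᶜ ⊓ c) with hk
  have hwa : w ≤ a := sup_le inf_le_left inf_le_left
  have hka : k ≤ aᶜ := sup_le inf_le_left inf_le_left
  have hbc : b ⊔ c = w ⊔ k := by
    conv_lhs => rw [hb, hc]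
    rw [sup_sup_sup_comm, hw, hk,
      inf_comm b a, inf_comm c a, inf_comm b aᶜ, inf_comm c aᶜ]
  have hwv : w ≤ a ⊓ (b ⊔ c) := by
    refine le_inf hwa ?_
    exact sup_le (inf_le_right.trans le_sup_left) (inf_le_right.trans le_sup_right)
  have hv := oml hwv
  have hkw : k ≤ wᶜ := hka.trans (oanti hwa)
  have hwk : wᶜ ⊓ (w ⊔ k) = k := by
    have := oml' hkw
    rwa [occ] at this
  have hd : (a ⊓ (b ⊔ c)) ⊓ wᶜ = ⊥ := by
    have h1 : (a ⊓ (b ⊔ c)) ⊓ wᶜ ≤ aᶜ := by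
      have h2 : (a ⊓ (b ⊔ c)) ⊓ wᶜ ≤ wᶜ ⊓ (w ⊔ k) := by
        rw [hbc]
        exact le_inf inf_le_right (inf_le_left.trans inf_le_right)
      rw [hwk] at h2
      exact h2.trans hka
    have h2 : (a ⊓ (b ⊔ c)) ⊓ wᶜ ≤ a := inf_le_left.trans inf_le_left
    have := le_inf h2 h1
    rw [oinf] at this
    exact le_bot_iff.mp this
  rw [hd, sup_bot_eq] at hv
  exact hv

private lemma cm_sup {a b c : α} (hab : Cm a b) (hac : Cm a c) : Cm a (b ⊔ c) := by
  apply cm_symm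
  unfold Cm
  have hb := cm_symm hab
  have hc := cm_symm hac
  apply le_antisymm
  · conv_lhs => rw [hb]
    conv_lhs => rw [hc]
    apply sup_le <;> apply sup_le
    · exact le_sup_left.trans' (le_inf (inf_le_left.trans le_sup_left) inf_le_right)
    · exact le_sup_right.trans' (le_inf (inf_le_left.trans le_sup_left) inf_le_right)
    · exact le_sup_left.trans' (le_inf (inf_le_left.trans le_sup_right) inf_le_right)
    · exact le_sup_right.trans' (le_inf (inf_le_left.trans le_sup_right) inf_le_right)
  · exact sup_le inf_le_left inf_le_left

private lemma cm_inf {a b c : α} (hab : Cm a b) (hac : Cm a c) : Cm a (b ⊓ c) := by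
  have h := cm_compl (cm_sup (cm_compl hab) (cm_compl hac))
  rwa [odm_sup, occ, occ] at h

/-- Foulis–Holland, middle form -/
private lemma fh3 {a b c : α} (hca : Cm c a) (hcb : Cm c b) :
    (a ⊔ c) ⊓ b = (a ⊓ b) ⊔ (c ⊓ b) := by
  have hc1 : Cm c (a ⊔ c) := cm_of_le le_sup_right
  have hcd : Cm c ((a ⊔ c) ⊓ b) := cm_inf hc1 hcb
  have hd := cm_symm hcd
  unfold Cm at hd
  have h1 : ((a ⊔ c) ⊓ b) ⊓ c = b ⊓ c := by
    apply le_antisymm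
    · exact inf_le_inf_right c inf_le_right
    · exact le_inf (le_inf (inf_le_right.trans le_sup_right) inf_le_left) inf_le_right
  have hfh : cᶜ ⊓ (a ⊔ c) = cᶜ ⊓ a := by
    have h2 : Cm cᶜ a := cm_symm (cm_compl (cm_symm hca))
    have h3 : Cm cᶜ c := cm_of_le_compl le_rfl
    rw [fh1 h2 h3, oinf', sup_bot_eq]
  have h2 : ((a ⊔ c) ⊓ b) ⊓ cᶜ ≤ a ⊓ b := by
    refine le_inf ?_ (inf_le_left.trans inf_le_right)
    have h4 : ((a ⊔ c) ⊓ b) ⊓ cᶜ ≤ cᶜ ⊓ (a ⊔ c) :=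
      le_inf inf_le_right (inf_le_left.trans inf_le_left)
    rw [hfh] at h4
    exact h4.trans inf_le_right
  apply le_antisymm
  · conv_lhs => rw [hd]
    rw [h1]
    exact sup_le (le_sup_right.trans' (inf_comm b c ▸ le_rfl)) (le_sup_left.trans' h2)
  · exact sup_le (inf_le_inf_right b le_sup_left) (inf_le_inf_right b le_sup_right)

private lemma pl_pl (x y : α) : pl (pl x y) y = x := by
  set t : α := xᶜ ⊓ y with htdef
  set s : α := x ⊓ (xᶜ ⊔ yᶜ) with hsdef
  set e : α := x ⊓ y with hedef
  -- basic commutations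
  have htx : Cm t x := cm_of_le_compl inf_le_left
  have hty : Cm t y := cm_of_le inf_le_right
  have htyc : Cm t yᶜ := cm_compl hty
  have htq : Cm t (xᶜ ⊔ yᶜ) := cm_of_le (inf_le_left.trans le_sup_left)
  have hex : Cm e x := cm_of_le inf_le_left
  have hey : Cm e y := cm_of_le inf_le_right
  have heyc : Cm e yᶜ := cm_compl hey
  have hexc : Cm e xᶜ := by
    apply cm_of_le_compl
    rw [occ]; exact inf_le_left
  -- z = s ⊔ t
  have hz : pl x y = s ⊔ t := by
    unfold pl
    rw [fh3 htx htq, inf_eq_left.mpr (inf_le_left.trans le_sup_left : t ≤ xᶜ ⊔ yᶜ)]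
  -- complements
  have hsc : sᶜ = xᶜ ⊔ e := by
    rw [hsdef, odm_inf, odm_sup, occ, occ, hedef]
  have htc : tᶜ = x ⊔ yᶜ := by
    rw [htdef, odm_inf, occ]
  have hzc : (pl x y)ᶜ = (xᶜ ⊔ e) ⊓ (x ⊔ yᶜ) := by
    rw [hz, odm_sup, hsc, htc]
  -- t ⊓ (x ⊔ yᶜ) = ⊥
  have htbot : t ⊓ (x ⊔ yᶜ) = ⊥ := by
    rw [fh1 htx htyc]
    have h1 : t ⊓ x ≤ ⊥ := by
      rw [← oinf' x]; exact inf_le_inf_right x inf_le_left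
    have h2 : t ⊓ yᶜ ≤ ⊥ := by
      rw [← oinf y]; exact inf_le_inf_right yᶜ inf_le_right
    rw [le_bot_iff.mp h1, le_bot_iff.mp h2, sup_bot_eq]
  -- key1 : zᶜ ⊓ y = e
  have key1 : (pl x y)ᶜ ⊓ y = e := by
    rw [hzc, inf_right_comm, fh3 hexc hey, inf_eq_left.mpr (inf_le_right : e ≤ y)]
    have ha2t : Cm (x ⊔ yᶜ) t := cm_symm (cm_sup htx htyc)
    have ha2e : Cm (x ⊔ yᶜ) e := cm_symm (cm_sup hex heyc)
    rw [inf_comm (t ⊔ e) (x ⊔ yᶜ)]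
    rw [fh1 ha2t ha2e, inf_comm (x ⊔ yᶜ) t, htbot,
      inf_eq_right.mpr (inf_le_left.trans le_sup_left : e ≤ x ⊔ yᶜ), bot_sup_eq]
  -- s ⊓ y = ⊥ and key2 : z ⊓ y = t
  have hts : Cm t s := by
    apply cm_of_le_compl
    rw [hsc]
    exact inf_le_left.trans le_sup_left
  have hsy : s ⊓ y = ⊥ := by
    have h1 : s ⊓ y ≤ e := inf_le_inf_right y inf_le_left
    have h2 : s ⊓ y ≤ eᶜ := by
      have : s ≤ eᶜ := by
        apply ole1
        rw [hsc]; exact le_sup_right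
      exact inf_le_left.trans this
    have := le_inf h1 h2
    rw [oinf] at this
    exact le_bot_iff.mp this
  have key2 : pl x y ⊓ y = t := by
    rw [hz, fh3 hts hty, hsy, inf_eq_left.mpr (inf_le_right : t ≤ y), bot_sup_eq]
  -- x = e ⊔ s
  have hx : x = e ⊔ s := by
    have h1 := oml (inf_le_left : e ≤ x)
    rw [odm_inf] at h1
    exact h1
  -- part1 : z ⊔ (zᶜ ⊓ y) = x ⊔ t
  have part1 : pl x y ⊔ ((pl x y)ᶜ ⊓ y) = x ⊔ t := by
    rw [key1, hz, hx, sup_assoc, sup_comm t e, ← sup_assoc, sup_comm s e]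
  -- part2 : zᶜ ⊔ yᶜ = x ⊔ yᶜ
  have part2 : (pl x y)ᶜ ⊔ yᶜ = x ⊔ yᶜ := by
    rw [← odm_inf, key2, htc]
  -- final
  have hxt : Cm xᶜ t := cm_symm (cm_compl htx)
  have hxx : Cm xᶜ x := cm_of_le_compl le_rfl
  show (pl x y ⊔ ((pl x y)ᶜ ⊓ y)) ⊓ ((pl x y)ᶜ ⊔ yᶜ) = x
  rw [part1, part2]
  have hwx : x ≤ (x ⊔ t) ⊓ (x ⊔ yᶜ) := le_inf le_sup_left le_sup_left
  have hw := oml hwx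
  have hwc : ((x ⊔ t) ⊓ (x ⊔ yᶜ)) ⊓ xᶜ = ⊥ := by
    rw [inf_right_comm, inf_comm (x ⊔ t) xᶜ, fh1 hxx hxt, oinf',
      inf_eq_right.mpr (inf_le_left : t ≤ xᶜ), bot_sup_eq]
    exact htbot
  rw [hwc, sup_bot_eq] at hw
  exact hw

end OMLFacts

theorem stmt_12 {α : Type*} [OML α] :
    (∀ a b c : α, pl a b = pl c b → a = c) ∧
    (∀ a b : α, ∃ c : α, pl c a = b ∧ c = pl b a) := by
  constructor
  · intro a b c h
    have h2 : pl (pl a b) b = pl (pl c b) b := by rw [h]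
    rwa [pl_pl, pl_pl] at h2
  · intro a b
    exact ⟨pl b a, pl_pl a b ▸ pl_pl b a, rfl⟩
end

section
/- In an orthomodular lattice, the following are equivalent for elements a, b: (i) a commutes with b; (ii) (a △ b) △ b = a △ (b △ b), where x △ y := (x ∨ y) ∧ (x' ∨ y'); (iii) a +_l (a +_l b) = (a +_l a) +_l b, where x +_l y := (x ∨ (x' ∧ y)) ∧ (x' ∨ y'). -/
def tri {α : Type*} [OML α] (x y : α) : α := (x ⊔ y) ⊓ (xᶜ ⊔ yᶜ)
namespace OMLAux

variable {α : Type*} [OML α]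

lemma cc (x : α) : xᶜᶜ = x := OML.compl_compl x

lemma anti {x y : α} (h : x ≤ y) : yᶜ ≤ xᶜ := OML.compl_antitone x y h

lemma infc (x : α) : x ⊓ xᶜ = ⊥ := OML.inf_compl x

lemma supc (x : α) : x ⊔ xᶜ = ⊤ := OML.sup_compl x

lemma om {x y : α} (h : x ≤ y) : y = x ⊔ (y ⊓ xᶜ) := OML.orthomodular x y h

lemma le_of_anti {x y : α} (h : xᶜ ≤ yᶜ) : y ≤ x := by
  have := anti h; rwa [cc, cc] at this

lemma compl_sup' (x y : α) : (x ⊔ y)ᶜ = xᶜ ⊓ yᶜ := by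
  apply le_antisymm
  · exact le_inf (anti le_sup_left) (anti le_sup_right)
  · apply le_of_anti
    rw [cc]
    exact sup_le (le_of_anti (by rw [cc]; exact inf_le_left))
      (le_of_anti (by rw [cc]; exact inf_le_right))

lemma compl_inf' (x y : α) : (x ⊓ y)ᶜ = xᶜ ⊔ yᶜ := by
  have : (xᶜ ⊔ yᶜ)ᶜ = x ⊓ y := by rw [compl_sup', cc, cc]
  rw [← this, cc]

lemma compl_bot' : (⊥ : α)ᶜ = ⊤ := by
  have := supc (⊥ : α); simpa using this

lemma compl_top' : (⊤ : α)ᶜ = ⊥ := by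
  have := infc (⊤ : α); simpa using this

/-- Dual orthomodular law. -/
lemma dual_om {p b : α} (h : p ≤ b) : b ⊓ (bᶜ ⊔ p) = p := by
  have h1 : bᶜ ≤ pᶜ := anti h
  have h2 := om h1
  have h3 := congrArg (·ᶜ) h2
  simp only [compl_sup', compl_inf', cc] at h3
  rw [sup_comm bᶜ p]
  exact h3.symm

/-- `a` commutes with `b`. -/
def Comm (a b : α) : Prop := a = (a ⊓ b) ⊔ (a ⊓ bᶜ)

lemma comm_of_le {a b : α} (h : a ≤ b) : Comm a b := by
  unfold Comm
  rw [inf_eq_left.mpr h]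
  exact (sup_eq_left.mpr inf_le_left).symm

lemma comm_of_ge {a b : α} (h : b ≤ a) : Comm a b := by
  unfold Comm
  rw [inf_eq_right.mpr h]
  exact om h

lemma comm_refl (a : α) : Comm a a := comm_of_le le_rfl

lemma comm_compl_right {a b : α} (h : Comm a b) : Comm a bᶜ := by
  unfold Comm at *
  rw [cc, sup_comm]
  exact h

lemma meet_lemma {a b : α} (h : Comm a b) : b ⊓ (bᶜ ⊔ a) = b ⊓ a := by
  have h1 : bᶜ ⊔ a = bᶜ ⊔ (a ⊓ b) := by
    apply le_antisymm
    · apply sup_le le_sup_left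
      nth_rewrite 1 [h]
      exact sup_le le_sup_right (inf_le_right.trans le_sup_left)
    · exact sup_le le_sup_left (inf_le_left.trans le_sup_right)
  rw [h1, dual_om (inf_le_right : a ⊓ b ≤ b), inf_comm]

lemma comm_symm {a b : α} (h : Comm a b) : Comm b a := by
  unfold Comm
  have h2 := om (inf_le_left : b ⊓ aᶜ ≤ b)
  rw [compl_inf', cc] at h2
  rw [meet_lemma h] at h2
  exact h2.trans (sup_comm _ _)

lemma comm_compl_left {a b : α} (h : Comm a b) : Comm aᶜ b :=
  comm_symm (comm_compl_right (comm_symm h))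

/-- Foulis–Holland distributivity: meet over join. -/
lemma fh_inf {c a b : α} (h1 : Comm c a) (h2 : Comm c b) :
    c ⊓ (a ⊔ b) = (c ⊓ a) ⊔ (c ⊓ b) := by
  have e_le : (c ⊓ a) ⊔ (c ⊓ b) ≤ c ⊓ (a ⊔ b) :=
    sup_le (le_inf inf_le_left (inf_le_right.trans le_sup_left))
      (le_inf inf_le_left (inf_le_right.trans le_sup_right))
  have hca : c ⊓ (cᶜ ⊔ aᶜ) = c ⊓ aᶜ := meet_lemma (comm_compl_left (comm_symm h1))
  have hcb : c ⊓ (cᶜ ⊔ bᶜ) = c ⊓ bᶜ := meet_lemma (comm_compl_left (comm_symm h2))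
  have hcompl : ((c ⊓ a) ⊔ (c ⊓ b))ᶜ = (cᶜ ⊔ aᶜ) ⊓ (cᶜ ⊔ bᶜ) := by
    rw [compl_sup', compl_inf', compl_inf']
  have key : (c ⊓ (a ⊔ b)) ⊓ ((c ⊓ a) ⊔ (c ⊓ b))ᶜ = ⊥ := by
    apply le_antisymm _ bot_le
    rw [hcompl]
    have t1 : (c ⊓ (a ⊔ b)) ⊓ ((cᶜ ⊔ aᶜ) ⊓ (cᶜ ⊔ bᶜ)) ≤ aᶜ := by
      calc (c ⊓ (a ⊔ b)) ⊓ ((cᶜ ⊔ aᶜ) ⊓ (cᶜ ⊔ bᶜ))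
          ≤ c ⊓ (cᶜ ⊔ aᶜ) := le_inf (inf_le_left.trans inf_le_left)
            (inf_le_right.trans inf_le_left)
        _ = c ⊓ aᶜ := hca
        _ ≤ aᶜ := inf_le_right
    have t2 : (c ⊓ (a ⊔ b)) ⊓ ((cᶜ ⊔ aᶜ) ⊓ (cᶜ ⊔ bᶜ)) ≤ bᶜ := by
      calc (c ⊓ (a ⊔ b)) ⊓ ((cᶜ ⊔ aᶜ) ⊓ (cᶜ ⊔ bᶜ))
          ≤ c ⊓ (cᶜ ⊔ bᶜ) := le_inf (inf_le_left.trans inf_le_left)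
            (inf_le_right.trans inf_le_right)
        _ = c ⊓ bᶜ := hcb
        _ ≤ bᶜ := inf_le_right
    have t3 : (c ⊓ (a ⊔ b)) ⊓ ((cᶜ ⊔ aᶜ) ⊓ (cᶜ ⊔ bᶜ)) ≤ a ⊔ b :=
      inf_le_left.trans inf_le_right
    have t4 : (c ⊓ (a ⊔ b)) ⊓ ((cᶜ ⊔ aᶜ) ⊓ (cᶜ ⊔ bᶜ)) ≤ (a ⊔ b) ⊓ (a ⊔ b)ᶜ := by
      apply le_inf t3
      rw [compl_sup']
      exact le_inf t1 t2
    rwa [infc] at t4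
  have h3 := om e_le
  rwa [key, sup_bot_eq] at h3

/-- Foulis–Holland distributivity: join over meet. -/
lemma fh_sup {c a b : α} (h1 : Comm c a) (h2 : Comm c b) :
    c ⊔ (a ⊓ b) = (c ⊔ a) ⊓ (c ⊔ b) := by
  have h1' : Comm cᶜ aᶜ := comm_compl_left (comm_compl_right h1)
  have h2' : Comm cᶜ bᶜ := comm_compl_left (comm_compl_right h2)
  have := congrArg (·ᶜ) (fh_inf h1' h2')
  simp only [compl_sup', compl_inf', cc] at this
  exact this

lemma comm_sup {c a b : α} (h1 : Comm c a) (h2 : Comm c b) : Comm c (a ⊔ b) := by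
  apply comm_symm
  unfold Comm
  rw [inf_comm (a ⊔ b) c, inf_comm (a ⊔ b) cᶜ, fh_inf h1 h2,
    fh_inf (comm_compl_left h1) (comm_compl_left h2),
    inf_comm c a, inf_comm c b, inf_comm cᶜ a, inf_comm cᶜ b,
    sup_sup_sup_comm]
  have ha : a = (a ⊓ c) ⊔ (a ⊓ cᶜ) := comm_symm h1
  have hb : b = (b ⊓ c) ⊔ (b ⊓ cᶜ) := comm_symm h2
  rw [← ha, ← hb]

lemma comm_inf {c a b : α} (h1 : Comm c a) (h2 : Comm c b) : Comm c (a ⊓ b) := by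
  have h := comm_compl_right (comm_sup (comm_compl_right h1) (comm_compl_right h2))
  rwa [compl_sup', cc, cc] at h

lemma comm_bot (c : α) : Comm c ⊥ := comm_of_ge bot_le

lemma comm_top (c : α) : Comm c ⊤ := comm_of_le le_top

/-- Canonical form of `tri (tri a b) b`. -/
lemma tri_tri_eq (a b : α) : tri (tri a b) b = (a ⊔ b) ⊓ ((a ⊓ b) ⊔ bᶜ) := by
  unfold tri
  have hcompl : ((a ⊔ b) ⊓ (aᶜ ⊔ bᶜ))ᶜ = (aᶜ ⊓ bᶜ) ⊔ (a ⊓ b) := by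
    rw [compl_inf', compl_sup', compl_sup', cc, cc]
  rw [hcompl]
  have h1 : (a ⊔ b) ⊓ (aᶜ ⊔ bᶜ) ⊔ b = a ⊔ b := by
    have c1 : Comm b (a ⊔ b) := comm_of_le le_sup_right
    have c2 : Comm b (aᶜ ⊔ bᶜ) := by
      have := comm_compl_left (comm_symm (comm_of_ge (le_sup_right : bᶜ ≤ aᶜ ⊔ bᶜ)))
      rwa [cc] at this
    rw [sup_comm, fh_sup c1 c2]
    have : b ⊔ (aᶜ ⊔ bᶜ) = ⊤ := by
      rw [sup_comm aᶜ bᶜ, ← sup_assoc, supc, top_sup_eq]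
    rw [this, inf_top_eq, sup_comm, sup_eq_left.mpr le_sup_right]
  have h2 : (aᶜ ⊓ bᶜ) ⊔ (a ⊓ b) ⊔ bᶜ = (a ⊓ b) ⊔ bᶜ := by
    rw [sup_comm (aᶜ ⊓ bᶜ) (a ⊓ b), sup_assoc,
      (sup_eq_right.mpr (inf_le_right : aᶜ ⊓ bᶜ ≤ bᶜ) : aᶜ ⊓ bᶜ ⊔ bᶜ = bᶜ)]
  rw [h1, h2]

/-- Canonical form of `pl a (pl a b)`. -/
lemma pl_pl_eq (a b : α) : pl a (pl a b) = (a ⊔ (aᶜ ⊓ b)) ⊓ (aᶜ ⊔ (a ⊓ b)) := by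
  unfold pl
  have hx : aᶜ ⊓ ((a ⊔ aᶜ ⊓ b) ⊓ (aᶜ ⊔ bᶜ)) = aᶜ ⊓ b := by
    rw [← inf_assoc]
    have : aᶜ ⊓ (a ⊔ aᶜ ⊓ b) = aᶜ ⊓ b := by
      rw [fh_inf (comm_compl_left (comm_refl a)) (comm_of_ge inf_le_left),
        inf_comm aᶜ a, infc, bot_sup_eq, inf_eq_right.mpr inf_le_left]
    rw [this]
    exact inf_eq_left.mpr ((inf_le_left : aᶜ ⊓ b ≤ aᶜ).trans le_sup_left)
  have hy : aᶜ ⊔ ((a ⊔ aᶜ ⊓ b) ⊓ (aᶜ ⊔ bᶜ))ᶜ = aᶜ ⊔ (a ⊓ b) := by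
    have : ((a ⊔ aᶜ ⊓ b) ⊓ (aᶜ ⊔ bᶜ))ᶜ = (aᶜ ⊓ (a ⊔ bᶜ)) ⊔ (a ⊓ b) := by
      simp only [compl_inf', compl_sup', cc]
    rw [this, ← sup_assoc, sup_eq_left.mpr (inf_le_left : aᶜ ⊓ (a ⊔ bᶜ) ≤ aᶜ)]
  rw [hx, hy]

lemma comm_iff_tri : ∀ a b : α, Comm a b ↔ tri (tri a b) b = (a : α) := by
  intro a b
  rw [tri_tri_eq]
  constructor
  · intro h
    have hb'a : Comm bᶜ a := comm_compl_left (comm_symm h)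
    have hb'b : Comm bᶜ b := comm_compl_left (comm_refl b)
    have e1 : (a ⊓ b) ⊔ bᶜ = a ⊔ bᶜ := by
      rw [sup_comm, fh_sup hb'a hb'b, sup_comm bᶜ b, supc, inf_top_eq, sup_comm]
    rw [e1, ← fh_sup h (comm_compl_right h), infc, sup_bot_eq]
  · intro h
    have c1 : Comm b (a ⊔ b) := comm_of_le le_sup_right
    have c2 : Comm b ((a ⊓ b) ⊔ bᶜ) :=
      comm_sup (comm_of_ge inf_le_right) (comm_compl_right (comm_refl b))
    have := comm_inf c1 c2
    rw [h] at this
    exact comm_symm this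

lemma comm_iff_pl : ∀ a b : α, Comm a b ↔ pl a (pl a b) = (b : α) := by
  intro a b
  rw [pl_pl_eq]
  constructor
  · intro h
    have e1 : a ⊔ (aᶜ ⊓ b) = a ⊔ b := by
      rw [fh_sup (comm_compl_right (comm_refl a)) h, supc, top_inf_eq]
    have e2 : aᶜ ⊔ (a ⊓ b) = aᶜ ⊔ b := by
      rw [fh_sup (comm_compl_left (comm_refl a)) (comm_compl_left h),
        sup_comm aᶜ a, supc, top_inf_eq]
    rw [e1, e2, sup_comm a b, sup_comm aᶜ b, ← fh_sup (comm_symm h)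
      (comm_compl_right (comm_symm h)), infc, sup_bot_eq]
  · intro h
    have c1 : Comm a (a ⊔ (aᶜ ⊓ b)) := comm_of_le le_sup_left
    have c2 : Comm a (aᶜ ⊔ (a ⊓ b)) :=
      comm_sup (comm_compl_right (comm_refl a)) (comm_of_ge inf_le_left)
    have := comm_inf c1 c2
    rwa [h] at this

end OMLAux

theorem stmt_15 {α : Type*} [OML α] (a b : α) :
    List.TFAE [a = (a ⊓ b) ⊔ (a ⊓ bᶜ),
      tri (tri a b) b = tri a (tri b b),
      pl a (pl a b) = pl (pl a a) b] := by
  open OMLAux in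
  have hbb : tri b b = (⊥ : α) := by
    unfold tri; rw [sup_idem, sup_idem, infc]
  have htriab : tri a (tri b b) = a := by
    rw [hbb]; unfold tri
    rw [sup_bot_eq, compl_bot', sup_top_eq, inf_top_eq]
  have hplaa : pl a a = (⊥ : α) := by
    unfold pl
    rw [inf_comm aᶜ a, infc, sup_bot_eq, sup_idem, infc]
  have hplb : pl (pl a a) b = b := by
    rw [hplaa]; unfold pl
    rw [compl_bot', top_inf_eq, bot_sup_eq, top_sup_eq, inf_top_eq]
  have h12 : (a = (a ⊓ b) ⊔ (a ⊓ bᶜ)) ↔ tri (tri a b) b = tri a (tri b b) := by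
    rw [htriab]
    exact OMLAux.comm_iff_tri a b
  have h13 : (a = (a ⊓ b) ⊔ (a ⊓ bᶜ)) ↔ pl a (pl a b) = pl (pl a a) b := by
    rw [hplb]
    exact OMLAux.comm_iff_pl a b
  tfae_have 1 ↔ 2 := h12
  tfae_have 1 ↔ 3 := h13
  tfae_finish
end
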